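/- Let G be a graph on n ≥ 4 nodes (n even) with planted bisection V1, V2. Suppose G1 = G[V1] and G2 = G[V2] are both d_in-regular for some d_in ∈ {1,…,n/2 − 1}, and the crossing bipartite graph G0 is d_out-regular for some d_out ∈ {0,…,n/2}. If d_in − d_out ≥ n/4, then the cut vector x̄ of the planted bisection is the UNIQUE optimal solution of the metric LP relaxation (LP-P); i.e., the LP relaxation recovers the planted bisection. -/

import Mathlib

noncomputable section
open scoped Classical

/-- `i` and `j` lie on the same side of the planted bisection
`V₁ = {0, …, n/2 - 1}`, `V₂ = {n/2, …, n-1}`. -/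
def sameSide (n : ℕ) (i j : Fin n) : Prop :=
  ((i : ℕ) < n / 2 ↔ (j : ℕ) < n / 2)

/-- The sum of `f i j` over all unordered pairs `{i, j}` with `i < j`. -/
def pairSum (n : ℕ) (f : Fin n → Fin n → ℝ) : ℝ :=
  ∑ i : Fin n, ∑ j : Fin n, if i < j then f i j else 0

/-- Feasibility for the metric LP relaxation (LP-P): symmetry of the indexing by
unordered pairs, the triangle inequalities, the perimeter inequalities, and the
equipartition equality constraint. -/
def LPfeasible (n : ℕ) (x : Fin n → Fin n → ℝ) : Prop :=
  (∀ i j, x i j = x j i) ∧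
  (∀ i j k : Fin n, i ≠ j → i ≠ k → j ≠ k → x i j ≤ x i k + x j k) ∧
  (∀ i j k : Fin n, i < j → j < k → x i j + x i k + x j k ≤ 2) ∧
  pairSum n x = (n : ℝ) ^ 2 / 4

/-- The objective function of (LP-P): `∑_{(i,j) ∈ E} x_{ij}`, each edge counted once. -/
def LPobj (n : ℕ) (G : SimpleGraph (Fin n)) (x : Fin n → Fin n → ℝ) : ℝ :=
  ∑ i : Fin n, ∑ j : Fin n, if i < j ∧ G.Adj i j then x i j else 0

/-- The cut vector of the bisection `(S, Sᶜ)`. -/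
def cutVecOf {n : ℕ} (S : Finset (Fin n)) : Fin n → Fin n → ℝ :=
  fun i j => if (i ∈ S ↔ j ∈ S) then 0 else 1

/-- The cut vector of the planted bisection `V₁ = {0, …, n/2 - 1}`, `V₂ = {n/2, …, n-1}`. -/
def cutVec (n : ℕ) : Fin n → Fin n → ℝ :=
  fun i j => if sameSide n i j then 0 else 1

/-- The LP relaxation (LP-P) for the graph `G` recovers the bisection with cut vector
`xb`: `xb` is feasible, and it is the unique optimal solution (any feasible point
with the same objective value agrees with `xb` on all off-diagonal entries). -/
def LPrecoversOf (n : ℕ) (G : SimpleGraph (Fin n)) (xb : Fin n → Fin n → ℝ) : Prop :=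
  LPfeasible n xb ∧
  ∀ x : Fin n → Fin n → ℝ, LPfeasible n x →
    LPobj n G xb ≤ LPobj n G x ∧
    (LPobj n G x = LPobj n G xb → ∀ i j : Fin n, i ≠ j → x i j = xb i j)

/-- The LP relaxation (LP-P) for `G` recovers the planted bisection
`V₁ = {0, …, n/2 - 1}`, `V₂ = {n/2, …, n-1}`. -/
def LPrecovers (n : ℕ) (G : SimpleGraph (Fin n)) : Prop :=
  LPrecoversOf n G (cutVec n)

/-- The degree of `v` in the graph `G₁ ∪ G₂` of within-part edges of `G`
(with respect to the planted bisection into the first and second half). -/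
def inDeg (n : ℕ) (G : SimpleGraph (Fin n)) (v : Fin n) : ℕ :=
  {w : Fin n | G.Adj v w ∧ sameSide n v w}.ncard

/-- The degree of `v` in the crossing bipartite graph `G₀` of `G`
(with respect to the planted bisection into the first and second half). -/
def outDeg (n : ℕ) (G : SimpleGraph (Fin n)) (v : Fin n) : ℕ :=
  {w : Fin n | G.Adj v w ∧ ¬ sameSide n v w}.ncard

/-!
For feasible `x`, the deviation `z = cutDeviation n x` (`x` on pairs inside a part, `1 - x` on
crossing pairs, i.e. `|x - x̄|`) is a pseudometric off the diagonal by the triangle and perimeter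
inequalities. The equipartition constraint says that `z` has as much mass inside the parts as
across them, and twice the objective gap `obj x - obj x̄` is the `z`-mass of the internal edges
minus that of the crossing edges.

Summing the triangle inequality over all third points bounds `n z_ik` by the row sums at `i` and
`k`, so by `d_out`-regularity the crossing edges carry at most a `2 d_out / n` share of the total
mass. An internal non-edge `ik` has at least `2 d_in + 2 - n/2` common neighbours `j`, each giving
`z_ik ≤ z_ij + z_kj`, and double counting bounds the mass of internal non-edges by that of the
internal edges. With `d_in - d_out ≥ n/4` this gives `∑ z ≤ n (obj x - obj x̄)`: the gap is
nonnegative, and it vanishes only if `z = 0`, i.e. `x = x̄`.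
-/

open Finset

section OffDiagonal

variable {V : Type*} [Fintype V] [DecidableEq V] {r : V → V → Prop} [DecidableRel r]

structure IsOffDiagPseudometric (z : V → V → ℝ) : Prop where
  symm : ∀ i j, z i j = z j i
  nonneg : ∀ i j, i ≠ j → 0 ≤ z i j
  triangle : ∀ i j k, i ≠ j → i ≠ k → j ≠ k → z i j ≤ z i k + z j k

def rowSum (f : V → V → ℝ) (i : V) : ℝ :=
  ∑ j ∈ univ.erase i, f i j

lemma two_mul_sum_ite_lt [LinearOrder V] {f : V → V → ℝ} (hf : ∀ i j, f i j = f j i) :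
    2 * ∑ i, ∑ j, (if i < j then f i j else 0) = ∑ i, rowSum f i := by
  have hswap : ∑ i, ∑ j, (if j < i then f i j else 0) =
      ∑ i, ∑ j, (if i < j then f i j else 0) := by
    rw [sum_comm]
    simp_rw [hf]
  have hrow : ∀ i, rowSum f i =
      ∑ j, ((if i < j then f i j else 0) + if j < i then f i j else 0) := by
    intro i
    have hdiag : (if i < i then f i i else 0) + (if i < i then f i i else 0) = 0 := by simp
    rw [rowSum, ← sum_erase univ (f := fun j => (if i < j then f i j else 0) +
      if j < i then f i j else 0) hdiag]
    refine sum_congr rfl fun j hj => ?_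
    rcases (ne_of_mem_erase hj).lt_or_gt with h | h <;> simp [h, h.not_gt]
  simp_rw [hrow, sum_add_distrib, hswap]
  ring

lemma rowSum_eq_sum_class_erase_add (f : V → V → ℝ) {i : V} (hi : r i i) :
    rowSum f i =
      ∑ j ∈ (univ.filter (r i)).erase i, f i j + ∑ j ∈ univ.filter (¬ r i ·), f i j := by
  rw [rowSum, ← sum_filter_add_sum_filter_not (univ.erase i) (r i), filter_erase]
  congr 1
  refine sum_congr ?_ fun _ _ => rfl
  ext j
  by_cases hj : j = i <;> simp [hj, hi]

namespace SimpleGraph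

variable (H : SimpleGraph V) [DecidableRel H.Adj]

def classNonNeighborFinset (r : V → V → Prop) [DecidableRel r] (i : V) : Finset V :=
  univ.filter fun k => k ≠ i ∧ r i k ∧ ¬ H.Adj i k

variable {H}

lemma mem_classNonNeighborFinset_comm (hr : Equivalence r) {i k : V} :
    k ∈ H.classNonNeighborFinset r i ↔ i ∈ H.classNonNeighborFinset r k := by
  simp only [classNonNeighborFinset, mem_filter, mem_univ, true_and]
  exact ⟨fun ⟨h1, h2, h3⟩ => ⟨h1.symm, hr.symm h2, fun h => h3 h.symm⟩,
    fun ⟨h1, h2, h3⟩ => ⟨h1.symm, hr.symm h2, fun h => h3 h.symm⟩⟩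

lemma erase_filter_eq_neighborFinset_union (hHr : ∀ v w, H.Adj v w → r v w) (i : V) :
    (univ.filter (r i)).erase i = H.neighborFinset i ∪ H.classNonNeighborFinset r i := by
  ext k
  simp only [classNonNeighborFinset, mem_erase, mem_filter, mem_univ, true_and, mem_union,
    mem_neighborFinset]
  by_cases hk : H.Adj i k
  · simp [hk, hk.ne', hHr i k hk]
  · simp [hk]

lemma disjoint_neighborFinset_classNonNeighborFinset (i : V) :
    Disjoint (H.neighborFinset i) (H.classNonNeighborFinset r i) := by
  rw [Finset.disjoint_left]
  intro k hk
  simp [classNonNeighborFinset, (H.mem_neighborFinset i k).1 hk]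

lemma card_classNonNeighborFinset_add_degree_lt (hHr : ∀ v w, H.Adj v w → r v w) {i : V}
    (hi : r i i) :
    #(H.classNonNeighborFinset r i) + H.degree i < #(univ.filter (r i)) := by
  have h := congrArg card (erase_filter_eq_neighborFinset_union hHr i)
  rw [card_union_of_disjoint (disjoint_neighborFinset_classNonNeighborFinset i),
    card_neighborFinset_eq_degree, card_erase_of_mem (by simp [hi])] at h
  have : 0 < #(univ.filter (r i)) := card_pos.2 ⟨i, by simp [hi]⟩
  omega

lemma degree_add_degree_add_two_le (hr : Equivalence r) (hHr : ∀ v w, H.Adj v w → r v w)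
    {i k : V} (hk : k ∈ H.classNonNeighborFinset r i) :
    H.degree i + H.degree k + 2 ≤
      #(H.neighborFinset i ∩ H.neighborFinset k) + #(univ.filter (r i)) := by
  simp only [classNonNeighborFinset, mem_filter, mem_univ, true_and] at hk
  obtain ⟨hki, hik, hnadj⟩ := hk
  have hsub : insert i (insert k (H.neighborFinset i ∪ H.neighborFinset k)) ⊆
      univ.filter (r i) := by
    intro j hj
    simp only [mem_insert, mem_union, mem_neighborFinset] at hj
    rcases hj with rfl | rfl | hj | hj
    · simp [hr.refl]
    · simp [hik]
    · simp [hHr _ _ hj]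
    · simp [hr.trans hik (hHr _ _ hj)]
  have hk : k ∉ H.neighborFinset i ∪ H.neighborFinset k := by simp [hnadj]
  have hnadj' : ¬ H.Adj k i := fun h => hnadj h.symm
  have hi : i ∉ insert k (H.neighborFinset i ∪ H.neighborFinset k) := by
    simp [hki.symm, hnadj']
  have h := card_le_card hsub
  rw [card_insert_of_notMem hi, card_insert_of_notMem hk] at h
  have := card_inter_add_card_union (H.neighborFinset i) (H.neighborFinset k)
  simp only [card_neighborFinset_eq_degree] at this
  omega

end SimpleGraph

namespace IsOffDiagPseudometric

variable {z : V → V → ℝ} (hz : IsOffDiagPseudometric z) {H : SimpleGraph V}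
  [DecidableRel H.Adj]
include hz

lemma rowSum_nonneg (i : V) : 0 ≤ rowSum z i :=
  sum_nonneg fun j hj => hz.nonneg i j (ne_of_mem_erase hj).symm

lemma card_mul_le_rowSum_add_rowSum {i k : V} (hik : i ≠ k) :
    Fintype.card V * z i k ≤ rowSum z i + rowSum z k := by
  set D := (univ.erase i).erase k
  have hcard : (#D : ℝ) = Fintype.card V - 2 := by
    have h2 : 1 < Fintype.card V := Fintype.one_lt_card_iff.2 ⟨i, k, hik⟩
    rw [card_erase_of_mem (by simp [hik.symm]), card_erase_of_mem (mem_univ i), card_univ,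
      Nat.sub_sub, Nat.cast_sub h2]
    norm_num
  have htri : #D * z i k ≤ ∑ j ∈ D, z i j + ∑ j ∈ D, z k j := by
    rw [← sum_add_distrib, ← nsmul_eq_mul, ← sum_const]
    refine sum_le_sum fun j hj => ?_
    have hj' := mem_erase.1 hj
    exact hz.triangle i k j hik (ne_of_mem_erase hj'.2).symm hj'.1.symm
  have hi : rowSum z i = z i k + ∑ j ∈ D, z i j :=
    (add_sum_erase _ _ (mem_erase.2 ⟨hik.symm, mem_univ k⟩)).symm
  have hk : rowSum z k = z k i + ∑ j ∈ D, z k j := by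
    rw [rowSum, ← add_sum_erase _ _ (mem_erase.2 ⟨hik, mem_univ i⟩), erase_right_comm]
  rw [hcard] at htri
  linarith [hz.symm k i]

lemma card_mul_sum_adj_le (B : SimpleGraph V) [DecidableRel B.Adj] {d : ℕ}
    (hB : ∀ v, B.degree v ≤ d) :
    Fintype.card V * ∑ i, ∑ k ∈ B.neighborFinset i, z i k ≤ 2 * d * ∑ i, rowSum z i := by
  have hdeg : ∀ i, ∑ _k ∈ B.neighborFinset i, rowSum z i ≤ d * rowSum z i := fun i => by
    rw [sum_const, B.card_neighborFinset_eq_degree, nsmul_eq_mul]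
    exact mul_le_mul_of_nonneg_right (by exact_mod_cast hB i) (hz.rowSum_nonneg i)
  have hswap : ∑ i, ∑ k ∈ B.neighborFinset i, rowSum z k
      = ∑ k, ∑ _i ∈ B.neighborFinset k, rowSum z k :=
    sum_comm' fun i k => by simp [B.adj_comm]
  calc Fintype.card V * ∑ i, ∑ k ∈ B.neighborFinset i, z i k
      = ∑ i, ∑ k ∈ B.neighborFinset i, Fintype.card V * z i k := by simp_rw [mul_sum]
    _ ≤ ∑ i, ∑ k ∈ B.neighborFinset i, (rowSum z i + rowSum z k) :=
        sum_le_sum fun i _ => sum_le_sum fun k hk =>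
          hz.card_mul_le_rowSum_add_rowSum (B.ne_of_adj ((B.mem_neighborFinset i k).1 hk))
    _ ≤ ∑ i, d * rowSum z i + ∑ i, d * rowSum z i := by
        simp_rw [sum_add_distrib]
        rw [hswap]
        exact add_le_add (sum_le_sum fun i _ => hdeg i) (sum_le_sum fun i _ => hdeg i)
    _ = 2 * d * ∑ i, rowSum z i := by rw [← mul_sum]; ring

lemma eq_zero_of_sum_rowSum_eq_zero (h : ∑ i, rowSum z i = 0) {i j : V} (hij : i ≠ j) :
    z i j = 0 := by
  have hrow := (sum_eq_zero_iff_of_nonneg fun v _ => hz.rowSum_nonneg v).1 h i (mem_univ i)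
  exact (sum_eq_zero_iff_of_nonneg fun k hk => hz.nonneg i k (ne_of_mem_erase hk).symm).1 hrow j
    (mem_erase.2 ⟨hij.symm, mem_univ j⟩)

lemma mul_le_sum_inter_neighborFinset (hr : Equivalence r) (hHr : ∀ v w, H.Adj v w → r v w)
    {m d : ℕ} (hm : ∀ v, #(univ.filter (r v)) ≤ m) (hd : ∀ v, d ≤ H.degree v)
    {i k : V} (hk : k ∈ H.classNonNeighborFinset r i) :
    (2 * d + 2 - m : ℝ) * z i k ≤
      ∑ j ∈ H.neighborFinset i ∩ H.neighborFinset k, (z i j + z k j) := by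
  have hcoef : (2 * d + 2 - m : ℝ) ≤ #(H.neighborFinset i ∩ H.neighborFinset k) := by
    have : 2 * d + 2 ≤ #(H.neighborFinset i ∩ H.neighborFinset k) + m := by
      linarith [H.degree_add_degree_add_two_le hr hHr hk, hm i, hd i, hd k]
    rw [sub_le_iff_le_add]
    exact_mod_cast this
  have hik : i ≠ k := (mem_filter.1 hk).2.1.symm
  calc (2 * d + 2 - m : ℝ) * z i k
      ≤ #(H.neighborFinset i ∩ H.neighborFinset k) * z i k :=
        mul_le_mul_of_nonneg_right hcoef (hz.nonneg i k hik)
    _ = ∑ _j ∈ H.neighborFinset i ∩ H.neighborFinset k, z i k := by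
        rw [sum_const, nsmul_eq_mul]
    _ ≤ ∑ j ∈ H.neighborFinset i ∩ H.neighborFinset k, (z i j + z k j) := by
        refine sum_le_sum fun j hj => ?_
        simp only [mem_inter, SimpleGraph.mem_neighborFinset] at hj
        exact hz.triangle i k j hik hj.1.ne hj.2.ne

lemma sum_classNonNeighborFinset_le (hr : Equivalence r) (hHr : ∀ v w, H.Adj v w → r v w)
    {m d : ℕ} (hm : ∀ v, #(univ.filter (r v)) ≤ m) (hd : ∀ v, d ≤ H.degree v) :
    (2 * d + 2 - m : ℝ) * ∑ i, ∑ k ∈ H.classNonNeighborFinset r i, z i k ≤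
      2 * (m - 1 - d : ℝ) * ∑ i, ∑ j ∈ H.neighborFinset i, z i j := by
  set NN := H.classNonNeighborFinset r
  set C := fun i k => H.neighborFinset i ∩ H.neighborFinset k
  have hswap : ∑ i, ∑ k ∈ NN i, ∑ j ∈ C i k, z k j = ∑ i, ∑ k ∈ NN i, ∑ j ∈ C i k, z i j := by
    rw [sum_comm' (t' := univ) (s' := NN) fun i k => by
      simp [NN, SimpleGraph.mem_classNonNeighborFinset_comm hr]]
    simp_rw [C, inter_comm]
  have hrow : ∀ i, ∑ k ∈ NN i, ∑ j ∈ C i k, z i j ≤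
      (m - 1 - d : ℝ) * ∑ j ∈ H.neighborFinset i, z i j := by
    intro i
    have hnonneg : ∀ j ∈ H.neighborFinset i, 0 ≤ z i j := fun j hj =>
      hz.nonneg i j ((H.mem_neighborFinset i j).1 hj).ne
    have hcard : (#(NN i) : ℝ) ≤ m - 1 - d := by
      have : #(NN i) + d + 1 ≤ m := by
        linarith [H.card_classNonNeighborFinset_add_degree_lt hHr (hr.refl i), hm i, hd i]
      rw [le_sub_iff_add_le, le_sub_iff_add_le]
      exact_mod_cast this
    calc ∑ k ∈ NN i, ∑ j ∈ C i k, z i j ≤ ∑ _k ∈ NN i, ∑ j ∈ H.neighborFinset i, z i j :=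
          sum_le_sum fun k _ =>
            sum_le_sum_of_subset_of_nonneg inter_subset_left fun j hj _ => hnonneg j hj
      _ = #(NN i) * ∑ j ∈ H.neighborFinset i, z i j := by rw [sum_const, nsmul_eq_mul]
      _ ≤ _ := mul_le_mul_of_nonneg_right hcard (sum_nonneg hnonneg)
  calc (2 * d + 2 - m : ℝ) * ∑ i, ∑ k ∈ NN i, z i k
      = ∑ i, ∑ k ∈ NN i, (2 * d + 2 - m : ℝ) * z i k := by simp_rw [mul_sum]
    _ ≤ ∑ i, ∑ k ∈ NN i, ∑ j ∈ C i k, (z i j + z k j) :=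
        sum_le_sum fun i _ => sum_le_sum fun k hk =>
          hz.mul_le_sum_inter_neighborFinset hr hHr hm hd hk
    _ = 2 * ∑ i, ∑ k ∈ NN i, ∑ j ∈ C i k, z i j := by
        simp_rw [sum_add_distrib]
        rw [hswap]
        ring
    _ ≤ 2 * ∑ i, (m - 1 - d : ℝ) * ∑ j ∈ H.neighborFinset i, z i j := by
        gcongr with i
        exact hrow i
    _ = 2 * (m - 1 - d : ℝ) * ∑ i, ∑ j ∈ H.neighborFinset i, z i j := by
        rw [← mul_sum, mul_assoc]

end IsOffDiagPseudometric

end OffDiagonal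

section PlantedBisection

variable {n : ℕ}

lemma sameSide_equivalence (n : ℕ) : Equivalence (sameSide n) :=
  ⟨fun _ => Iff.rfl, Iff.symm, Iff.trans⟩

lemma card_filter_sameSide (hn : Even n) (i : Fin n) :
    #(univ.filter (sameSide n i)) = n / 2 := by
  have hlt : #(univ.filter fun j : Fin n => (j : ℕ) < n / 2) = n / 2 := by
    rw [Fin.card_filter_val_lt]; omega
  have hcompl := card_filter_add_card_filter_not (s := univ) fun j : Fin n => (j : ℕ) < n / 2
  rw [hlt, card_univ, Fintype.card_fin] at hcompl
  by_cases hi : (i : ℕ) < n / 2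
  · rw [← hlt]
    exact congrArg card (filter_congr fun j _ => by simp [sameSide, hi])
  · rw [filter_congr (q := fun j : Fin n => ¬ (j : ℕ) < n / 2) fun j _ => by
      simp [sameSide, hi]]
    obtain ⟨k, rfl⟩ := hn
    omega

lemma card_filter_not_sameSide (hn : Even n) (i : Fin n) :
    #(univ.filter (¬ sameSide n i ·)) = n / 2 := by
  have h := card_filter_add_card_filter_not (s := univ) (sameSide n i)
  rw [card_filter_sameSide hn i, card_univ, Fintype.card_fin] at h
  obtain ⟨k, rfl⟩ := hn
  omega

def withinGraph (n : ℕ) (G : SimpleGraph (Fin n)) : SimpleGraph (Fin n) where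
  Adj v w := G.Adj v w ∧ sameSide n v w
  symm := ⟨fun _ _ h => ⟨h.1.symm, h.2.symm⟩⟩
  loopless := ⟨fun _ h => G.irrefl h.1⟩

def crossGraph (n : ℕ) (G : SimpleGraph (Fin n)) : SimpleGraph (Fin n) where
  Adj v w := G.Adj v w ∧ ¬ sameSide n v w
  symm := ⟨fun _ _ h => ⟨h.1.symm, fun h' => h.2 h'.symm⟩⟩
  loopless := ⟨fun _ h => G.irrefl h.1⟩

variable (G : SimpleGraph (Fin n))

lemma degree_withinGraph (v : Fin n) : (withinGraph n G).degree v = inDeg n G v := by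
  rw [inDeg, ← SimpleGraph.card_neighborSet_eq_degree, ← Set.toFinset_card,
    ← Set.ncard_eq_toFinset_card']
  rfl

lemma degree_crossGraph (v : Fin n) : (crossGraph n G).degree v = outDeg n G v := by
  rw [outDeg, ← SimpleGraph.card_neighborSet_eq_degree, ← Set.toFinset_card,
    ← Set.ncard_eq_toFinset_card']
  rfl

lemma neighborFinset_withinGraph (v : Fin n) :
    (withinGraph n G).neighborFinset v = (G.neighborFinset v).filter (sameSide n v) := by
  ext w; rw [SimpleGraph.mem_neighborFinset]; simp [withinGraph]

lemma neighborFinset_crossGraph (v : Fin n) :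
    (crossGraph n G).neighborFinset v = (G.neighborFinset v).filter (¬ sameSide n v ·) := by
  ext w; rw [SimpleGraph.mem_neighborFinset]; simp [crossGraph]

end PlantedBisection

section LinearProgram

variable {n : ℕ} {x : Fin n → Fin n → ℝ}

lemma cutVec_symm (i j : Fin n) : cutVec n i j = cutVec n j i := by
  by_cases h : sameSide n i j
  · rw [cutVec, cutVec, if_pos h, if_pos ((sameSide_equivalence n).symm h)]
  · rw [cutVec, cutVec, if_neg h, if_neg fun h' => h ((sameSide_equivalence n).symm h')]

lemma rowSum_cutVec (hn : Even n) (i : Fin n) : rowSum (cutVec n) i = (n / 2 : ℕ) := by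
  have hsame : ∀ j ∈ (univ.filter (sameSide n i)).erase i, cutVec n i j = 0 := fun j hj =>
    if_pos (mem_filter.1 (mem_of_mem_erase hj)).2
  have hcross : ∀ j ∈ univ.filter (¬ sameSide n i ·), cutVec n i j = 1 := fun j hj =>
    if_neg (mem_filter.1 hj).2
  rw [rowSum_eq_sum_class_erase_add (r := sameSide n) _ Iff.rfl, sum_eq_zero hsame,
    sum_congr rfl hcross, sum_const, card_filter_not_sameSide hn i]
  simp

lemma pairSum_cutVec (hn : Even n) : pairSum n (cutVec n) = (n : ℝ) ^ 2 / 4 := by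
  have h := two_mul_sum_ite_lt (f := cutVec n) cutVec_symm
  simp only [rowSum_cutVec hn, sum_const, card_univ, Fintype.card_fin, nsmul_eq_mul,
    Nat.cast_div hn.two_dvd (two_ne_zero' ℝ)] at h
  rw [pairSum]
  linarith

lemma cutVec_feasible (hn : Even n) : LPfeasible n (cutVec n) := by
  refine ⟨cutVec_symm, fun i j k _ _ _ => ?_, fun i j k _ _ => ?_, pairSum_cutVec hn⟩ <;>
  · by_cases hi : (i : ℕ) < n / 2 <;> by_cases hj : (j : ℕ) < n / 2 <;>
      by_cases hk : (k : ℕ) < n / 2 <;> simp [cutVec, sameSide, hi, hj, hk] <;> norm_num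

def cutDeviation (n : ℕ) (x : Fin n → Fin n → ℝ) (i j : Fin n) : ℝ :=
  if sameSide n i j then x i j else 1 - x i j

lemma sub_cutVec_eq (x : Fin n → Fin n → ℝ) (i j : Fin n) :
    x i j - cutVec n i j =
      if sameSide n i j then cutDeviation n x i j else -cutDeviation n x i j := by
  by_cases h : sameSide n i j <;> simp [cutVec, cutDeviation, h]

namespace LPfeasible

variable (hx : LPfeasible n x)
include hx

lemma perimeter_of_ne {i j k : Fin n} (hij : i ≠ j) (hik : i ≠ k) (hjk : j ≠ k) :
    x i j + x i k + x j k ≤ 2 := by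
  obtain ⟨hs, -, hp, -⟩ := hx
  have := hs i j; have := hs i k; have := hs j k
  rcases hij.lt_or_gt with h1 | h1 <;> rcases hik.lt_or_gt with h2 | h2 <;>
    rcases hjk.lt_or_gt with h3 | h3
  all_goals first
    | linarith [hp i j k ‹_› ‹_›] | linarith [hp i k j ‹_› ‹_›] | linarith [hp j i k ‹_› ‹_›]
    | linarith [hp j k i ‹_› ‹_›] | linarith [hp k i j ‹_› ‹_›] | linarith [hp k j i ‹_› ‹_›]

lemma nonneg (hn : 2 < n) {i j : Fin n} (hij : i ≠ j) : 0 ≤ x i j := by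
  obtain ⟨k, hki, hkj⟩ := Fin.exists_ne_and_ne_of_two_lt i j hn
  linarith [hx.2.1 i k j hki.symm hij hkj, hx.2.1 j k i hkj.symm hij.symm hki,
    hx.1 k j, hx.1 j i, hx.1 k i]

lemma le_one (hn : 2 < n) {i j : Fin n} (hij : i ≠ j) : x i j ≤ 1 := by
  obtain ⟨k, hki, hkj⟩ := Fin.exists_ne_and_ne_of_two_lt i j hn
  linarith [hx.2.1 i j k hij hki.symm hkj.symm, hx.perimeter_of_ne hij hki.symm hkj.symm]

lemma isOffDiagPseudometric_cutDeviation (hn : 2 < n) :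
    IsOffDiagPseudometric (cutDeviation n x) where
  symm i j := by
    simp only [cutDeviation, hx.1 i j, show sameSide n i j ↔ sameSide n j i from iff_comm]
  nonneg i j hij := by
    by_cases h : sameSide n i j <;> simp only [cutDeviation, h, if_true, if_false]
    · exact hx.nonneg hn hij
    · linarith [hx.le_one hn hij]
  triangle i j k hij hik hjk := by
    have htri := hx.2.1
    have hper := hx.perimeter_of_ne hij hik hjk
    by_cases hi : (i : ℕ) < n / 2 <;> by_cases hj : (j : ℕ) < n / 2 <;>
      by_cases hk : (k : ℕ) < n / 2 <;> simp only [cutDeviation, sameSide, hi, hj, hk] <;>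
      simp only [if_true, if_false, iff_false, false_iff, not_true] <;>
      linarith [htri i j k hij hik hjk, htri j k i hjk hij.symm hik.symm,
        htri i k j hik hij hjk.symm, hx.1 j i, hx.1 k i, hx.1 k j]

lemma sum_sameSide_cutDeviation_eq (hn : Even n) :
    ∑ i, ∑ j ∈ (univ.filter (sameSide n i)).erase i, cutDeviation n x i j =
      ∑ i, ∑ j ∈ univ.filter (¬ sameSide n i ·), cutDeviation n x i j := by
  have hpair : ∑ i, ∑ j, (if i < j then x i j - cutVec n i j else 0) =
      pairSum n x - pairSum n (cutVec n) := by
    rw [pairSum, pairSum, ← sum_sub_distrib]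
    refine sum_congr rfl fun i _ => ?_
    rw [← sum_sub_distrib]
    exact sum_congr rfl fun j _ => by split_ifs <;> ring
  rw [hx.2.2.2, pairSum_cutVec hn, sub_self] at hpair
  have hrow : ∀ i, rowSum (fun i j => x i j - cutVec n i j) i =
      ∑ j ∈ (univ.filter (sameSide n i)).erase i, cutDeviation n x i j -
        ∑ j ∈ univ.filter (¬ sameSide n i ·), cutDeviation n x i j := by
    intro i
    rw [rowSum_eq_sum_class_erase_add (r := sameSide n) _ Iff.rfl, sub_eq_add_neg,
      ← sum_neg_distrib]
    congr 1
    · exact sum_congr rfl fun j hj => by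
        rw [sub_cutVec_eq, if_pos (mem_filter.1 (mem_of_mem_erase hj)).2]
    · exact sum_congr rfl fun j hj => by rw [sub_cutVec_eq, if_neg (mem_filter.1 hj).2]
  have h := two_mul_sum_ite_lt (f := fun i j => x i j - cutVec n i j)
    fun i j => by rw [hx.1 i j, cutVec_symm]
  rw [hpair, mul_zero, sum_congr rfl fun i _ => hrow i, sum_sub_distrib] at h
  linarith

end LPfeasible

lemma two_mul_LPobj_sub_LPobj_cutVec (hsymm : ∀ i j, x i j = x j i)
    (G : SimpleGraph (Fin n)) :
    2 * (LPobj n G x - LPobj n G (cutVec n)) =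
      ∑ i, ∑ j ∈ (withinGraph n G).neighborFinset i, cutDeviation n x i j -
        ∑ i, ∑ j ∈ (crossGraph n G).neighborFinset i, cutDeviation n x i j := by
  set f : Fin n → Fin n → ℝ := fun i j => if G.Adj i j then x i j - cutVec n i j else 0
  have hf : ∀ i j, f i j = f j i := fun i j => by
    simp only [f, G.adj_comm, hsymm i j, cutVec_symm i j]
  have hobj : LPobj n G x - LPobj n G (cutVec n) = ∑ i, ∑ j, if i < j then f i j else 0 := by
    rw [LPobj, LPobj, ← sum_sub_distrib]
    refine sum_congr rfl fun i _ => ?_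
    rw [← sum_sub_distrib]
    exact sum_congr rfl fun j _ => by
      by_cases hij : i < j <;> by_cases ha : G.Adj i j <;> simp [f, hij, ha]
  have hrow : ∀ i, rowSum f i =
      ∑ j ∈ (withinGraph n G).neighborFinset i, cutDeviation n x i j -
        ∑ j ∈ (crossGraph n G).neighborFinset i, cutDeviation n x i j := by
    intro i
    have hnbr : (univ.erase i).filter (G.Adj i) = G.neighborFinset i := by
      ext j
      simp only [mem_filter, mem_erase, mem_univ, SimpleGraph.mem_neighborFinset]
      exact ⟨fun h => h.2, fun h => ⟨⟨h.ne', trivial⟩, h⟩⟩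
    simp only [rowSum, f]
    rw [← sum_filter, hnbr, ← sum_filter_add_sum_filter_not _ (sameSide n i),
      neighborFinset_withinGraph, neighborFinset_crossGraph, sub_eq_add_neg, ← sum_neg_distrib]
    congr 1
    · exact sum_congr rfl fun j hj => by rw [sub_cutVec_eq, if_pos (mem_filter.1 hj).2]
    · exact sum_congr rfl fun j hj => by rw [sub_cutVec_eq, if_neg (mem_filter.1 hj).2]
  rw [hobj, two_mul_sum_ite_lt hf, ← sum_sub_distrib]
  exact sum_congr rfl fun i _ => hrow i

lemma LPfeasible.sum_rowSum_cutDeviation_le (hx : LPfeasible n x) (hn : Even n) (hn3 : 2 < n) (G : SimpleGraph (Fin n)) {din dout : ℕ}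
    (hin : ∀ v, inDeg n G v = din) (hout : ∀ v, outDeg n G v = dout)
    (h : (din : ℝ) - dout ≥ n / 4) :
    ∑ i, rowSum (cutDeviation n x) i ≤ n * (LPobj n G x - LPobj n G (cutVec n)) := by
  have hbalance := hx.sum_sameSide_cutDeviation_eq hn
  have hgap := congrArg ((n : ℝ) * ·) (two_mul_LPobj_sub_LPobj_cutVec hx.1 G)
  set z := cutDeviation n x
  set H := withinGraph n G
  have hz := hx.isOffDiagPseudometric_cutDeviation hn3
  have hHr : ∀ v w, H.Adj v w → sameSide n v w := fun _ _ h => h.2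
  have hwithin := hz.sum_classNonNeighborFinset_le (sameSide_equivalence n) hHr (m := n / 2)
    (fun v => (card_filter_sameSide hn v).le)
    fun v => ((degree_withinGraph G v).trans (hin v)).ge
  have hcross := hz.card_mul_sum_adj_le (crossGraph n G) (d := dout)
    fun v => ((degree_crossGraph G v).trans (hout v)).le
  have hclass : ∀ i, ∑ j ∈ (univ.filter (sameSide n i)).erase i, z i j =
      ∑ j ∈ H.neighborFinset i, z i j + ∑ j ∈ H.classNonNeighborFinset (sameSide n) i, z i j :=
    fun i => by
      rw [H.erase_filter_eq_neighborFinset_union hHr,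
        sum_union (H.disjoint_neighborFinset_classNonNeighborFinset i)]
  have hrows : ∑ i, rowSum z i = 2 * (∑ i, ∑ j ∈ H.neighborFinset i, z i j +
      ∑ i, ∑ j ∈ H.classNonNeighborFinset (sameSide n) i, z i j) := by
    rw [sum_congr rfl fun i _ =>
        rowSum_eq_sum_class_erase_add (r := sameSide n) z (i := i) Iff.rfl,
      sum_add_distrib, ← hbalance]
    simp only [hclass, sum_add_distrib]
    ring
  have hnonneg : 0 ≤ ∑ i, ∑ j ∈ H.neighborFinset i, z i j +
      ∑ i, ∑ j ∈ H.classNonNeighborFinset (sameSide n) i, z i j := by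
    linarith [sum_nonneg fun i (_ : i ∈ univ) => hz.rowSum_nonneg i]
  have hcoef : (0 : ℝ) ≤ din - dout - n / 4 := by linarith
  rw [Fintype.card_fin, hrows] at hcross
  rw [Nat.cast_div hn.two_dvd (two_ne_zero' ℝ)] at hwithin
  rw [hrows]
  linarith [mul_nonneg hcoef hnonneg]

end LinearProgram

theorem lp_uniqueness_regular (n : ℕ) (hn : Even n) (hn4 : 4 ≤ n)
    (G : SimpleGraph (Fin n)) (din dout : ℕ)
    (hreg12 : ∀ v : Fin n, inDeg n G v = din)
    (hreg0 : ∀ v : Fin n, outDeg n G v = dout)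
    (h : (din : ℝ) - (dout : ℝ) ≥ (n : ℝ) / 4) :
    LPrecovers n G := by
  refine ⟨cutVec_feasible hn, fun x hx => ?_⟩
  have hz := hx.isOffDiagPseudometric_cutDeviation (by omega)
  have hbound := hx.sum_rowSum_cutDeviation_le hn (by omega) G hreg12 hreg0 h
  have hrows : 0 ≤ ∑ i, rowSum (cutDeviation n x) i := sum_nonneg fun i _ => hz.rowSum_nonneg i
  have hn0 : (0 : ℝ) < n := by exact_mod_cast (by omega : 0 < n)
  refine ⟨sub_nonneg.1 (nonneg_of_mul_nonneg_right (hrows.trans hbound) hn0), fun heq i j hij => ?_⟩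
  rw [heq, sub_self, mul_zero] at hbound
  have hzero := hz.eq_zero_of_sum_rowSum_eq_zero (le_antisymm hbound hrows) hij
  have hsub := sub_cutVec_eq x i j
  split_ifs at hsub <;> linarith
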